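/- arXiv:0904.0102 — 2 statements merged into one kernel-verified Lean document; each statement's English description precedes it below -/
import Mathlib

section
/- Let B ⊂ GL_{2n}(k) be the group of invertible lower triangular matrices acting on alternating (skew-symmetric with zero diagonal) matrices x by p·x = p x ᵗp. Then for each 1 ≤ i ≤ n, the Pfaffian pf_i(x) of the upper-left 2i×2i block satisfies pf_i(p·x) = (p₁₁ ⋯ p_{2i,2i})·pf_i(x) for all p ∈ B. -/
open Matrix

/-- The index `2i + r` in `Fin (2m)`. -/
def pairIdx {m : ℕ} (i : Fin m) (r : Fin 2) : Fin (2 * m) :=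
  ⟨2 * i.val + r.val, by have h1 := i.isLt; have h2 := r.isLt; omega⟩

/-- The Pfaffian of a `2m × 2m` matrix, as the signed sum over perfect matchings
(realized as permutations `σ` with `σ(2i) < σ(2i+1)` and `σ(0) < σ(2) < ⋯`). -/
def pfaffian {k : Type*} [CommRing k] {m : ℕ} (A : Matrix (Fin (2 * m)) (Fin (2 * m)) k) : k :=
  ∑ σ ∈ Finset.univ.filter (fun σ : Equiv.Perm (Fin (2 * m)) =>
      (∀ i : Fin m, σ (pairIdx i 0) < σ (pairIdx i 1)) ∧
      ∀ i j : Fin m, i < j → σ (pairIdx i 0) < σ (pairIdx j 0)),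
    (Equiv.Perm.sign σ : ℤ) • ∏ i : Fin m, A (σ (pairIdx i 0)) (σ (pairIdx i 1))

/-- The Pfaffian of the upper-left `2i × 2i` block. -/
def pf {k : Type*} [CommRing k] {n : ℕ} (i : ℕ) (h : 2 * i ≤ 2 * n)
    (x : Matrix (Fin (2 * n)) (Fin (2 * n)) k) : k :=
  pfaffian (x.submatrix (Fin.castLE h) (Fin.castLE h))

/-!
A permutation `σ` in the index set of `pfaffian` encodes the perfect matching `partner σ`, and
for skew-symmetric `A` its term depends only on that matching. Over a field every matrix is a
product of diagonal matrices and transvections, which reduces `pf (P A Pᵀ) = det P * pf A` to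
these two cases. The Pfaffian is affine in each line (row and column `i`), so for the
transvection `1 + c Eᵢⱼ` the correction term is the Pfaffian of a matrix whose lines `i` and `j`
agree; that one vanishes, its terms cancelling in pairs under `σ ↦ swap i j * σ`. Finally, for
lower triangular `p` the leading `2i × 2i` block of `p x pᵀ` is `p' x' p'ᵀ`, where `p'` and `x'`
are the blocks of `p` and `x`, and `det p'` is the product of its diagonal.
-/

open Equiv Equiv.Perm

section

variable {R : Type*} [CommRing R] {ι κ : Type*}

theorem Matrix.apply_swap_of_transpose_eq_neg {A : Matrix ι ι R} (hA : Aᵀ = -A) (a b : ι) :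
    A b a = -A a b := by
  rw [← transpose_apply A, hA, neg_apply]

theorem Matrix.submatrix_mul_of_mul_apply_eq_zero {l n o l' n' o' : Type*} [Fintype n]
    [Fintype n'] (M : Matrix l n R) (N : Matrix n o R) (r : l' → l) (e : n' ↪ n) (c : o' → o)
    (hMN : ∀ a b j, j ∉ Set.range e → M (r a) j * N j (c b) = 0) :
    (M * N).submatrix r c = M.submatrix r e * N.submatrix e c := by
  classical
  ext a b
  simp only [submatrix_apply, mul_apply]
  rw [← Finset.sum_map Finset.univ e fun j => M (r a) j * N j (c b)]
  exact (Finset.sum_subset (Finset.subset_univ _) fun j _ hj => hMN a b j (by simpa using hj)).symm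

theorem Matrix.transpose_transvection {n : Type*} [DecidableEq n] (i j : n) (c : R) :
    (transvection i j c)ᵀ = transvection j i c := by
  simp [transvection]

-- Skew-symmetry alone does not force a zero diagonal in characteristic 2.
def Matrix.IsAlternating (A : Matrix ι ι R) : Prop :=
  Aᵀ = -A ∧ ∀ a, A a a = 0

namespace Matrix.IsAlternating

variable {A : Matrix ι ι R}

theorem submatrix (hA : A.IsAlternating) (f : κ → ι) : (A.submatrix f f).IsAlternating :=
  ⟨by rw [transpose_submatrix, hA.1]; rfl, fun a => hA.2 (f a)⟩

theorem mul_mul_transpose [Fintype ι] (hA : A.IsAlternating) (P : Matrix κ ι R) :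
    (P * A * Pᵀ).IsAlternating := by
  refine ⟨by simp [transpose_mul, hA.1, Matrix.mul_assoc], fun a => ?_⟩
  simp only [mul_apply, transpose_apply, Finset.sum_mul, ← Finset.sum_product']
  -- the terms indexed by `(b, c)` and `(c, b)` cancel, and those with `b = c` vanish
  refine Finset.sum_ninvolution Prod.swap (fun x => ?_) (fun x hx h => ?_) (by simp)
    Prod.swap_swap
  · rw [Prod.fst_swap, Prod.snd_swap, apply_swap_of_transpose_eq_neg hA.1]
    ring
  · have hdiag : x.1 = x.2 := congrArg Prod.snd h
    rw [hdiag, hA.2, mul_zero, zero_mul] at hx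
    exact hx rfl

end Matrix.IsAlternating

end

namespace Pfaffian

variable {m : ℕ}

def pairEquiv (m : ℕ) : Fin m × Fin 2 ≃ Fin (2 * m) where
  toFun x := pairIdx x.1 x.2
  invFun a := (⟨a / 2, by omega⟩, ⟨a % 2, by omega⟩)
  left_inv := by
    rintro ⟨⟨l, hl⟩, ⟨r, hr⟩⟩
    ext <;> simp [pairIdx] <;> omega
  right_inv := by
    rintro ⟨a, ha⟩
    ext
    simp [pairIdx]
    omega

@[simp] theorem pairEquiv_apply (x : Fin m × Fin 2) : pairEquiv m x = pairIdx x.1 x.2 := rfl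

@[simp] theorem pairEquiv_symm_pairIdx (l : Fin m) (r : Fin 2) :
    (pairEquiv m).symm (pairIdx l r) = (l, r) :=
  (pairEquiv m).symm_apply_apply (l, r)

theorem pairIdx_inj {l l' : Fin m} {r r' : Fin 2} :
    pairIdx l r = pairIdx l' r' ↔ l = l' ∧ r = r' := by
  rw [← Prod.mk.injEq, ← (pairEquiv m).injective.eq_iff]
  rfl

theorem exists_pairIdx_eq (a : Fin (2 * m)) : ∃ l r, pairIdx l r = a :=
  ⟨_, _, (pairEquiv m).apply_symm_apply a⟩

theorem perm_ext_pairIdx {σ τ : Perm (Fin (2 * m))}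
    (h : ∀ l r, σ (pairIdx l r) = τ (pairIdx l r)) : σ = τ := by
  ext1 a
  obtain ⟨l, r, rfl⟩ := exists_pairIdx_eq a
  exact h l r

theorem perm_fin_two (e : Perm (Fin 2)) : e = 1 ∨ e = swap 0 1 := by
  revert e
  decide

def pairPerm (π : Perm (Fin m)) (ε : Fin m → Perm (Fin 2)) : Perm (Fin (2 * m)) :=
  (pairEquiv m).permCongr ((prodCongrLeft fun _ => π).trans (prodCongrRight ε))

@[simp] theorem pairPerm_pairIdx (π : Perm (Fin m)) (ε : Fin m → Perm (Fin 2)) (l : Fin m)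
    (r : Fin 2) : pairPerm π ε (pairIdx l r) = pairIdx (π l) (ε (π l) r) := by
  simp [pairPerm, permCongr_apply]

theorem sign_pairPerm (π : Perm (Fin m)) (ε : Fin m → Perm (Fin 2)) :
    sign (pairPerm π ε) = ∏ l, sign (ε l) := by
  rw [pairPerm, sign_permCongr, ← Perm.mul_def, Perm.sign_mul, sign_prodCongrRight,
    sign_prodCongrLeft, Fin.prod_univ_two, Int.units_mul_self, mul_one]

def pairSwap (m : ℕ) : Perm (Fin (2 * m)) :=
  pairPerm 1 fun _ => swap 0 1

@[simp] theorem pairSwap_pairIdx (l : Fin m) (r : Fin 2) :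
    pairSwap m (pairIdx l r) = pairIdx l (swap 0 1 r) := by
  simp [pairSwap]

theorem pairPerm_commute (π : Perm (Fin m)) (ε : Fin m → Perm (Fin 2)) :
    Commute (pairPerm π ε) (pairSwap m) := by
  refine perm_ext_pairIdx fun l r => ?_
  rcases perm_fin_two (ε (π l)) with h | h <;> simp [h]

-- The perfect matching `{{σ (pairIdx l 0), σ (pairIdx l 1)} | l}`, as an involution.
def partner (σ : Perm (Fin (2 * m))) : Perm (Fin (2 * m)) :=
  σ * pairSwap m * σ⁻¹

@[simp] theorem partner_apply_apply (σ : Perm (Fin (2 * m))) (l : Fin m) (r : Fin 2) :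
    partner σ (σ (pairIdx l r)) = σ (pairIdx l (swap 0 1 r)) := by
  simp [partner]

theorem partner_apply_ne (σ : Perm (Fin (2 * m))) (a : Fin (2 * m)) : partner σ a ≠ a := by
  obtain ⟨b, rfl⟩ := σ.surjective a
  obtain ⟨l, r, rfl⟩ := exists_pairIdx_eq b
  rw [partner_apply_apply, σ.injective.ne_iff, Ne, pairIdx_inj]
  fin_cases r <;> simp

theorem partner_mul_pairPerm (σ : Perm (Fin (2 * m))) (π : Perm (Fin m))
    (ε : Fin m → Perm (Fin 2)) : partner (σ * pairPerm π ε) = partner σ := by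
  rw [partner, partner, _root_.mul_inv_rev, mul_assoc σ, (pairPerm_commute π ε).eq]
  group

theorem partner_mul (τ σ : Perm (Fin (2 * m))) : partner (τ * σ) = τ * partner σ * τ⁻¹ := by
  simp only [partner, _root_.mul_inv_rev, mul_assoc]

def canonicalPerms (m : ℕ) : Finset (Perm (Fin (2 * m))) :=
  Finset.univ.filter (fun σ : Equiv.Perm (Fin (2 * m)) =>
      (∀ i : Fin m, σ (pairIdx i 0) < σ (pairIdx i 1)) ∧
      ∀ i j : Fin m, i < j → σ (pairIdx i 0) < σ (pairIdx j 0))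

theorem mem_canonicalPerms {σ : Perm (Fin (2 * m))} :
    σ ∈ canonicalPerms m ↔
      (∀ l, σ (pairIdx l 0) < σ (pairIdx l 1)) ∧ StrictMono fun l => σ (pairIdx l 0) := by
  simp [canonicalPerms, StrictMono]

theorem range_pairIdx_zero {σ : Perm (Fin (2 * m))} (hσ : σ ∈ canonicalPerms m) :
    Set.range (fun l => σ (pairIdx l 0)) = {a | a < partner σ a} := by
  obtain ⟨hpair, -⟩ := mem_canonicalPerms.1 hσ
  ext a
  obtain ⟨b, rfl⟩ := σ.surjective a
  obtain ⟨l, r, rfl⟩ := exists_pairIdx_eq b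
  fin_cases r
  · exact iff_of_true ⟨l, rfl⟩ (by simpa using hpair l)
  · refine iff_of_false ?_ (by simpa using (hpair l).asymm)
    rintro ⟨l', hl'⟩
    simp [σ.injective.eq_iff, pairIdx_inj] at hl'

theorem eq_of_partner_eq {σ τ : Perm (Fin (2 * m))} (hσ : σ ∈ canonicalPerms m)
    (hτ : τ ∈ canonicalPerms m) (h : partner σ = partner τ) : σ = τ := by
  have h0 : (fun l => σ (pairIdx l 0)) = fun l => τ (pairIdx l 0) :=
    ((mem_canonicalPerms.1 hσ).2.range_inj (mem_canonicalPerms.1 hτ).2).1 <| by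
      rw [range_pairIdx_zero hσ, range_pairIdx_zero hτ, h]
  refine perm_ext_pairIdx fun l r => ?_
  fin_cases r
  · exact congrFun h0 l
  · calc σ (pairIdx l 1) = partner σ (σ (pairIdx l 0)) := by simp
      _ = partner τ (τ (pairIdx l 0)) := by rw [h, congrFun h0 l]
      _ = τ (pairIdx l 1) := by simp

def pairOrient (σ : Perm (Fin (2 * m))) (l : Fin m) : Perm (Fin 2) :=
  if σ (pairIdx l 0) < σ (pairIdx l 1) then 1 else swap 0 1

theorem pairOrient_lt (σ : Perm (Fin (2 * m))) (l : Fin m) :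
    σ (pairIdx l (pairOrient σ l 0)) < σ (pairIdx l (pairOrient σ l 1)) := by
  unfold pairOrient
  split_ifs with h
  · exact h
  · refine lt_of_le_of_ne (not_lt.1 h) ?_
    simp [σ.injective.ne_iff, pairIdx_inj]

def pairMin (σ : Perm (Fin (2 * m))) (l : Fin m) : Fin (2 * m) :=
  σ (pairIdx l (pairOrient σ l 0))

theorem pairMin_injective (σ : Perm (Fin (2 * m))) : Function.Injective (pairMin σ) :=
  fun _ _ h => (pairIdx_inj.1 (σ.injective h)).1

def canonicalize (σ : Perm (Fin (2 * m))) : Perm (Fin (2 * m)) :=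
  σ * pairPerm (Tuple.sort (pairMin σ)) (pairOrient σ)

theorem canonicalize_mem (σ : Perm (Fin (2 * m))) : canonicalize σ ∈ canonicalPerms m := by
  refine mem_canonicalPerms.2 ⟨fun l => ?_, ?_⟩
  · simpa [canonicalize] using pairOrient_lt σ _
  · simpa [canonicalize, pairMin, Function.comp_def] using
      (Tuple.monotone_sort (pairMin σ)).strictMono_of_injective
        ((pairMin_injective σ).comp (Tuple.sort (pairMin σ)).injective)

theorem partner_canonicalize (σ : Perm (Fin (2 * m))) : partner (canonicalize σ) = partner σ :=
  partner_mul_pairPerm _ _ _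

variable {R : Type*} [CommRing R]

def pfaffianTerm (A : Matrix (Fin (2 * m)) (Fin (2 * m)) R) (σ : Perm (Fin (2 * m))) : R :=
  (sign σ : ℤ) • ∏ l, A (σ (pairIdx l 0)) (σ (pairIdx l 1))

theorem pfaffian_eq_sum (A : Matrix (Fin (2 * m)) (Fin (2 * m)) R) :
    pfaffian A = ∑ σ ∈ canonicalPerms m, pfaffianTerm A σ := rfl

theorem pfaffianTerm_mul_pairPerm {A : Matrix (Fin (2 * m)) (Fin (2 * m)) R} (hA : Aᵀ = -A)
    (σ : Perm (Fin (2 * m))) (π : Perm (Fin m)) (ε : Fin m → Perm (Fin 2)) :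
    pfaffianTerm A (σ * pairPerm π ε) = pfaffianTerm A σ := by
  have hflip (l : Fin m) : A (σ (pairIdx l (ε l 0))) (σ (pairIdx l (ε l 1))) =
      (sign (ε l) : ℤ) * A (σ (pairIdx l 0)) (σ (pairIdx l 1)) := by
    rcases perm_fin_two (ε l) with h | h
    · simp [h]
    · simpa [h, sign_swap] using apply_swap_of_transpose_eq_neg hA _ _
  have hsq : ((∏ l, sign (ε l) : ℤˣ) : R) * ((∏ l, sign (ε l) : ℤˣ) : R) = 1 := by
    rw [← Int.cast_mul, ← Units.val_mul, Int.units_mul_self, Units.val_one, Int.cast_one]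
  simp only [pfaffianTerm, Perm.mul_apply, pairPerm_pairIdx, Perm.sign_mul, sign_pairPerm]
  rw [Equiv.prod_comp π fun l => A (σ (pairIdx l (ε l 0))) (σ (pairIdx l (ε l 1)))]
  simp only [hflip, Finset.prod_mul_distrib, zsmul_eq_mul, Units.val_mul, Int.cast_mul]
  push_cast at hsq ⊢
  linear_combination (↑↑(sign σ) * ∏ l, A (σ (pairIdx l 0)) (σ (pairIdx l 1))) * hsq

theorem pfaffianTerm_swap_mul {A : Matrix (Fin (2 * m)) (Fin (2 * m)) R} {i j : Fin (2 * m)}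
    (hij : i ≠ j) (hA : ∀ a b, A (swap i j a) (swap i j b) = A a b) (σ : Perm (Fin (2 * m))) :
    pfaffianTerm A (swap i j * σ) = -pfaffianTerm A σ := by
  simp [pfaffianTerm, hA, Perm.sign_mul, sign_swap hij]

theorem pfaffianTerm_eq_zero_of_partner {A : Matrix (Fin (2 * m)) (Fin (2 * m)) R}
    (hA : Aᵀ = -A) {σ : Perm (Fin (2 * m))} {a b : Fin (2 * m)} (hab : partner σ a = b)
    (hAab : A a b = 0) : pfaffianTerm A σ = 0 := by
  obtain ⟨c, rfl⟩ := σ.surjective a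
  obtain ⟨l, r, rfl⟩ := exists_pairIdx_eq c
  rw [partner_apply_apply] at hab
  subst hab
  refine smul_eq_zero_of_right _ (Finset.prod_eq_zero (Finset.mem_univ l) ?_)
  fin_cases r
  · simpa using hAab
  · simp only [Fin.mk_one, swap_apply_right] at hAab
    rw [apply_swap_of_transpose_eq_neg hA, hAab, neg_zero]

end Pfaffian

open Pfaffian

section

variable {R : Type*} [CommRing R] {m : ℕ}

theorem pfaffian_submatrix_eq_zero {ι : Type*} {A : Matrix ι ι R} (hA : A.IsAlternating)
    {f : Fin (2 * m) → ι} {i j : Fin (2 * m)} (hij : i ≠ j) (hf : f i = f j) :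
    pfaffian (A.submatrix f f) = 0 := by
  have hfswap (a : Fin (2 * m)) : f (swap i j a) = f a := by
    rcases eq_or_ne a i with rfl | hai
    · rw [swap_apply_left, hf]
    rcases eq_or_ne a j with rfl | haj
    · rw [swap_apply_right, hf]
    rw [swap_apply_of_ne_of_ne hai haj]
  have hB := (hA.submatrix f).1
  rw [pfaffian_eq_sum]
  refine Finset.sum_involution (fun σ _ => canonicalize (swap i j * σ)) (fun σ _ => ?_)
    (fun σ _ hσ hfix => ?_) (fun σ _ => canonicalize_mem _) (fun σ hσ => ?_)
  · rw [canonicalize, pfaffianTerm_mul_pairPerm hB,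
      pfaffianTerm_swap_mul hij (by simp [hfswap]), add_neg_cancel]
  · -- a fixed point matches `i` with `j`, so its term has the factor `A (f i) (f j) = 0`
    have hJ : partner σ = swap i j * partner σ * (swap i j)⁻¹ := by
      conv_lhs => rw [← hfix, partner_canonicalize, partner_mul]
    refine hσ (pfaffianTerm_eq_zero_of_partner hB (a := i) (b := j) ?_ (by simp [hf, hA.2]))
    by_contra hk
    have hji : partner σ j = partner σ i := by
      conv_lhs => rw [hJ]
      simp [swap_apply_of_ne_of_ne (partner_apply_ne σ i) hk]
    exact hij (Equiv.injective _ hji).symm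
  · refine eq_of_partner_eq (canonicalize_mem _) hσ ?_
    simp only [partner_canonicalize, partner_mul, swap_inv, mul_assoc, swap_mul_self_mul]
    simp only [← mul_assoc, mul_swap_mul_self]

theorem pfaffian_eq_add_mul_of_agree_off {A B C : Matrix (Fin (2 * m)) (Fin (2 * m)) R}
    (i : Fin (2 * m)) (c : R) (hC : ∀ a b, a ≠ b → (a = i ∨ b = i) → C a b = A a b + c * B a b)
    (hCA : ∀ a b, a ≠ i → b ≠ i → C a b = A a b) (hBA : ∀ a b, a ≠ i → b ≠ i → B a b = A a b) :
    pfaffian C = pfaffian A + c * pfaffian B := by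
  classical
  simp only [pfaffian_eq_sum, Finset.mul_sum, ← Finset.sum_add_distrib]
  refine Finset.sum_congr rfl fun σ _ => ?_
  obtain ⟨a, rfl⟩ := σ.surjective i
  obtain ⟨l₀, r₀, rfl⟩ := exists_pairIdx_eq a
  have hoff (X : Matrix (Fin (2 * m)) (Fin (2 * m)) R)
      (hX : ∀ a b, a ≠ σ (pairIdx l₀ r₀) → b ≠ σ (pairIdx l₀ r₀) → X a b = A a b) :
      ∏ l ∈ {l₀}ᶜ, X (σ (pairIdx l 0)) (σ (pairIdx l 1)) =
        ∏ l ∈ {l₀}ᶜ, A (σ (pairIdx l 0)) (σ (pairIdx l 1)) :=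
    Finset.prod_congr rfl fun l hl => by
      have hne : l ≠ l₀ := by simpa using hl
      exact hX _ _ (by simp [pairIdx_inj, hne]) (by simp [pairIdx_inj, hne])
  have hl₀ : C (σ (pairIdx l₀ 0)) (σ (pairIdx l₀ 1)) =
      A (σ (pairIdx l₀ 0)) (σ (pairIdx l₀ 1)) + c * B (σ (pairIdx l₀ 0)) (σ (pairIdx l₀ 1)) :=
    hC _ _ (by simp [pairIdx_inj]) (by fin_cases r₀ <;> simp)
  simp only [pfaffianTerm, Fintype.prod_eq_mul_prod_compl l₀, hoff C hCA, hoff B hBA, hl₀,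
    zsmul_eq_mul]
  ring

theorem pfaffian_diagonal_mul_mul_transpose (d : Fin (2 * m) → R)
    (A : Matrix (Fin (2 * m)) (Fin (2 * m)) R) :
    pfaffian (diagonal d * A * (diagonal d)ᵀ) = (∏ a, d a) * pfaffian A := by
  simp only [pfaffian_eq_sum, Finset.mul_sum]
  refine Finset.sum_congr rfl fun σ _ => ?_
  have hd : ∏ l, d (σ (pairIdx l 0)) * d (σ (pairIdx l 1)) = ∏ a, d a := by
    rw [← Equiv.prod_comp ((pairEquiv m).trans σ) d, Fintype.prod_prod_type]
    simp [Fin.prod_univ_two]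
  have hentry (a b : Fin (2 * m)) : (diagonal d * A * (diagonal d)ᵀ) a b = d a * d b * A a b := by
    rw [diagonal_transpose, mul_diagonal, diagonal_mul]
    ring
  simp only [pfaffianTerm, hentry, Finset.prod_mul_distrib, hd, zsmul_eq_mul]
  ring

theorem pfaffian_transvection_mul_mul_transpose {A : Matrix (Fin (2 * m)) (Fin (2 * m)) R}
    (hA : A.IsAlternating) {i j : Fin (2 * m)} (hij : i ≠ j) (c : R) :
    pfaffian (transvection i j c * A * (transvection i j c)ᵀ) = pfaffian A := by
  -- the correction term is the Pfaffian of `A` with line `i` replaced by line `j`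
  set f : Fin (2 * m) → Fin (2 * m) := Function.update id i j
  have hf (a : Fin (2 * m)) (ha : a ≠ i) : f a = a := Function.update_of_ne ha _ _
  rw [transpose_transvection,
    pfaffian_eq_add_mul_of_agree_off (A := A) (B := A.submatrix f f) i c,
    pfaffian_submatrix_eq_zero hA (f := f) hij (by simp [f, hf j hij.symm]), mul_zero, add_zero]
  · rintro a b hab (rfl | rfl)
    · rw [mul_transvection_apply_of_ne _ _ _ _ hab.symm, transvection_mul_apply_same,
        submatrix_apply, hf b hab.symm]
      simp [f]
    · rw [mul_transvection_apply_same, transvection_mul_apply_of_ne _ _ _ _ hab,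
        transvection_mul_apply_of_ne _ _ _ _ hab, submatrix_apply, hf a hab]
      simp [f]
  · intro a b ha hb
    rw [mul_transvection_apply_of_ne _ _ _ _ hb, transvection_mul_apply_of_ne _ _ _ _ ha]
  · intro a b ha hb
    rw [submatrix_apply, hf a ha, hf b hb]

theorem pfaffian_mul_mul_transpose {K : Type*} [Field K]
    (P : Matrix (Fin (2 * m)) (Fin (2 * m)) K) {A : Matrix (Fin (2 * m)) (Fin (2 * m)) K}
    (hA : A.IsAlternating) :
    pfaffian (P * A * Pᵀ) = P.det * pfaffian A := by
  refine diagonal_transvection_induction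
    (fun P => ∀ A : Matrix _ _ K, A.IsAlternating → pfaffian (P * A * Pᵀ) = P.det * pfaffian A)
    P ?_ ?_ ?_ A hA
  · intro d _ A _
    rw [pfaffian_diagonal_mul_mul_transpose, det_diagonal]
  · rintro ⟨i, j, hij, c⟩ A hA
    rw [TransvectionStruct.toMatrix_mk, pfaffian_transvection_mul_mul_transpose hA hij,
      det_transvection_of_ne i j hij, one_mul]
  · intro M N hM hN A hA
    rw [show M * N * A * (M * N)ᵀ = M * (N * A * Nᵀ) * Mᵀ by
        simp only [transpose_mul, Matrix.mul_assoc],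
      hM _ (hA.mul_mul_transpose N), hN A hA, det_mul, mul_assoc]

end

theorem stmt_8_general {k : Type*} [Field k] {n : ℕ}
    (p x : Matrix (Fin (2 * n)) (Fin (2 * n)) k)
    (hp : ∀ i j : Fin (2 * n), i < j → p i j = 0)
    (hx : x.transpose = -x) (hxd : ∀ i, x i i = 0)
    (i : ℕ) (h2 : 2 * i ≤ 2 * n) :
    pf i h2 (p * x * p.transpose) =
      (∏ j : Fin (2 * i), p (Fin.castLE h2 j) (Fin.castLE h2 j)) * pf i h2 x := by
  set e : Fin (2 * i) ↪ Fin (2 * n) := Fin.castLEEmb h2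
  have hpe (a : Fin (2 * i)) (j : Fin (2 * n)) (hj : j ∉ Set.range e) : p (e a) j = 0 :=
    hp _ _ <| Fin.lt_def.2 <| lt_of_lt_of_le a.2 <| not_lt.1 fun hlt => hj ⟨⟨j, hlt⟩, rfl⟩
  have hblock : (p * x * pᵀ).submatrix e e =
      p.submatrix e e * x.submatrix e e * (p.submatrix e e)ᵀ := by
    rw [Matrix.mul_assoc, submatrix_mul_of_mul_apply_eq_zero _ _ _ _ _ fun a b j hj => by
        rw [hpe a j hj, zero_mul],
      submatrix_mul_of_mul_apply_eq_zero _ _ _ _ _ fun a b j hj => by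
        rw [transpose_apply, hpe b j hj, mul_zero],
      transpose_submatrix, Matrix.mul_assoc]
  have hlower : (p.submatrix e e).IsLowerTriangular := fun a b hab => hp _ _ hab
  show pfaffian ((p * x * pᵀ).submatrix e e) = _ * pfaffian (x.submatrix e e)
  rw [hblock, pfaffian_mul_mul_transpose _ ((show x.IsAlternating from ⟨hx, hxd⟩).submatrix e),
    det_of_isLowerTriangular _ hlower]
  rfl

/-- For `p` invertible lower triangular in `GL_{2n}(k)` (`char k ≠ 2`) acting on
alternating matrices by `p · x = p x ᵗp`, one has
`pf_i(p·x) = (p₁₁ ⋯ p_{2i,2i}) · pf_i(x)` for `1 ≤ i ≤ n`. -/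
theorem stmt_8 {k : Type*} [Field k] (hk : ringChar k ≠ 2) {n : ℕ}
    (p x : Matrix (Fin (2 * n)) (Fin (2 * n)) k)
    (hp : ∀ i j : Fin (2 * n), i < j → p i j = 0) (hpu : IsUnit p.det)
    (hx : x.transpose = -x) (hxd : ∀ i, x i i = 0)
    (i : ℕ) (h1 : 1 ≤ i) (hin : i ≤ n) (h2 : 2 * i ≤ 2 * n) :
    pf i h2 (p * x * p.transpose) =
      (∏ j : Fin (2 * i), p (Fin.castLE h2 j) (Fin.castLE h2 j)) * pf i h2 x :=
  stmt_8_general p x hp hx hxd i h2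
end

section
/- In Sp₂(k) = {x ∈ GL₄(k) : ᵗx H₂ x = H₂}, H₂ = [[0,1₂],[−1₂,0]], with the Borel subgroup B of G = Sp₂ × (SL₂)² acting by (g₁,g₂)·x = g₁ x ᵗg₂ (via the standard embedding of (SL₂)² into Sp₂) as described, the function f₄(x) = x₃₁x₄₃ − x₄₁x₃₃ is a relative B-invariant: f₄(b·x) = b₁b₂·f₄(x) where b₁, b₂ are the indicated diagonal parameters of b. -/
/-! `f₄ x` is the `2 × 2` minor of `x` on rows `3, 4` and columns `1, 3` (counting from 1).
Rows `3, 4` of `g₁` vanish outside columns `3, 4`, and rows `1, 3` of `g₂` vanish outside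
columns `1, 3`, so this minor of `g₁ x ᵗg₂` is the product of the minors `g₁[34, 34]`,
`x[34, 13]` and `ᵗg₂[13, 13]`, whose determinants are `b₁b₂`, `f₄ x` and `b₃b₃⁻¹ = 1`. -/

open Matrix

namespace Matrix

variable {l m o ι ι' κ R : Type*} [Fintype m] [Fintype ι] [NonUnitalNonAssocSemiring R]

theorem submatrix_mul_of_rows_supported (A : Matrix l m R) (B : Matrix m o R) (r : κ → l)
    (e : ι → m) (he : Function.Injective e) (f : ι' → o)
    (hA : ∀ i j, j ∉ Set.range e → A (r i) j = 0) :
    (A * B).submatrix r f = A.submatrix r e * B.submatrix e f := by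
  ext i j
  simp only [submatrix_apply, mul_apply]
  rw [← Finset.sum_subset (Finset.subset_univ (Finset.univ.map ⟨e, he⟩)), Finset.sum_map]
  · rfl
  · intro j _ hj
    rw [hA i j (by simpa using hj), zero_mul]

theorem submatrix_mul_of_cols_supported (A : Matrix l m R) (B : Matrix m o R) (r : κ → l)
    (e : ι → m) (he : Function.Injective e) (f : ι' → o)
    (hB : ∀ i j, i ∉ Set.range e → B i (f j) = 0) :
    (A * B).submatrix r f = A.submatrix r e * B.submatrix e f := by
  ext i j
  simp only [submatrix_apply, mul_apply]
  rw [← Finset.sum_subset (Finset.subset_univ (Finset.univ.map ⟨e, he⟩)), Finset.sum_map]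
  · rfl
  · intro l _ hl
    rw [hB l j (by simpa using hl), mul_zero]

end Matrix

theorem stmt_18_general {k : Type*} [Field k]
    (x : Matrix (Fin 4) (Fin 4) k)
    (a11 a12 a13 a14 a22 a23 a24 b1 b2 c : k)
    (b3 b4 b3i b4i c1 c2 : k) (hb3 : b3 * b3i = 1)
    (g₁ g₂ : Matrix (Fin 4) (Fin 4) k)
    (hg₁ : g₁ = !![a11, a12, a13, a14; 0, a22, a23, a24; 0, 0, b1, 0; 0, 0, c, b2])
    (hg₂ : g₂ = !![b3, 0, 0, 0; 0, b4, 0, 0; c1, 0, b3i, 0; 0, c2, 0, b4i])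
    (f₄ : Matrix (Fin 4) (Fin 4) k → k)
    (hf₄ : ∀ y : Matrix (Fin 4) (Fin 4) k, f₄ y = y 2 0 * y 3 2 - y 3 0 * y 2 2) :
    f₄ (g₁ * x * g₂.transpose) = b1 * b2 * f₄ x := by
  set rows : Fin 2 → Fin 4 := ![2, 3]
  set cols : Fin 2 → Fin 4 := ![0, 2]
  have hf₄_det : ∀ y, f₄ y = (y.submatrix rows cols).det := fun y => by
    rw [hf₄, det_fin_two]; simp [rows, cols]; ring
  have hg₁_minor : (g₁.submatrix rows rows).det = b1 * b2 := by
    rw [hg₁, det_fin_two]; simp [rows]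
  have hg₂_minor : (g₂ᵀ.submatrix cols cols).det = 1 := by
    rw [hg₂, det_fin_two]; simpa [cols] using hb3
  rw [hf₄_det, hf₄_det,
    submatrix_mul_of_cols_supported _ _ rows cols (by decide) cols (by
      intro i j hi; subst hg₂; fin_cases j <;> simp [cols] at hi ⊢ <;> fin_cases i <;> simp_all),
    submatrix_mul_of_rows_supported _ _ rows rows (by decide) cols (by
      intro i j hj; subst hg₁; fin_cases i <;> simp [rows] at hj ⊢ <;> fin_cases j <;> simp_all),
    det_mul, det_mul, hg₁_minor, hg₂_minor, mul_one]

/-- `f₄(x) = x₃₁x₄₃ − x₄₁x₃₃` is a relative invariant of the Borel subgroup of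
`Sp₂ × (SL₂)²` acting on `Sp₂` by `(g₁,g₂)·x = g₁ x ᵗg₂`:
`f₄(b·x) = b₁b₂·f₄(x)` for `b` of the indicated block lower-triangular shape with
diagonal parameters `b₁, b₂, b₃, b₄`. -/
theorem stmt_18 {k : Type*} [Field k]
    (H : Matrix (Fin 4) (Fin 4) k)
    (hH : H = !![0, 0, 1, 0; 0, 0, 0, 1; -1, 0, 0, 0; 0, -1, 0, 0])
    (x : Matrix (Fin 4) (Fin 4) k) (hx : x.transpose * H * x = H)
    (a11 a12 a13 a14 a22 a23 a24 b1 b2 c : k)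
    (b3 b4 b3i b4i c1 c2 : k) (hb3 : b3 * b3i = 1) (hb4 : b4 * b4i = 1)
    (g₁ g₂ : Matrix (Fin 4) (Fin 4) k)
    (hg₁ : g₁ = !![a11, a12, a13, a14; 0, a22, a23, a24; 0, 0, b1, 0; 0, 0, c, b2])
    (hg₂ : g₂ = !![b3, 0, 0, 0; 0, b4, 0, 0; c1, 0, b3i, 0; 0, c2, 0, b4i])
    (hg₁Sp : g₁.transpose * H * g₁ = H) (hg₂Sp : g₂.transpose * H * g₂ = H)
    (f₄ : Matrix (Fin 4) (Fin 4) k → k)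
    (hf₄ : ∀ y : Matrix (Fin 4) (Fin 4) k, f₄ y = y 2 0 * y 3 2 - y 3 0 * y 2 2) :
    f₄ (g₁ * x * g₂.transpose) = b1 * b2 * f₄ x :=
  stmt_18_general x a11 a12 a13 a14 a22 a23 a24 b1 b2 c b3 b4 b3i b4i c1 c2 hb3 g₁ g₂ hg₁ hg₂ f₄ hf₄
end
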